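/- There is no 5-by-5 real matrix M = (a_{ij}) such that for every subset X ⊆ {1,…,5}, det(M[X]) = 1 if X is in the family 𝓠₅ and det(M[X]) = 0 otherwise, where 𝓠₅ consists of: ∅, {1,2,3,4,5}, all singletons {i}, all pairs {i, i+2} (indices mod 5), all triples {i, i+1, i+2} (mod 5), and all 4-element sets of consecutive elements {i, i+1, i+2, i+3} (mod 5). -/
import Mathlib

open Matrix

/-- The principal submatrix of `M` on the index set `I` (with `det (psub M ∅) = 1`). -/
def psub {m : Type*} {K : Type*} (M : Matrix m m K) (I : Finset m) :
    Matrix I I K := fun i j => M i.1 j.1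

/-- The quasi-trees of the bouquet `ℂ₅`: `∅`, the full set, all singletons, all pairs
`{i, i+2}`, all consecutive triples and all consecutive quadruples (indices mod 5). -/
def Q5 : Set (Finset (Fin 5)) :=
  {X | X = ∅ ∨ X = Finset.univ ∨ (∃ i, X = {i}) ∨ (∃ i, X = {i, i + 2}) ∨
    (∃ i, X = {i, i + 1, i + 2}) ∨ (∃ i, X = {i, i + 1, i + 2, i + 3})}

lemma det_psub_singleton (M : Matrix (Fin 5) (Fin 5) ℝ) (i : Fin 5) :
    (psub M {i}).det = M i i := by
  let e : Fin 1 ≃ ({i} : Finset (Fin 5)) :=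
    { toFun := fun _ => ⟨i, Finset.mem_singleton_self i⟩
      invFun := fun _ => 0
      left_inv := fun x => Subsingleton.elim _ _
      right_inv := fun x => Subtype.ext (Finset.mem_singleton.mp x.2).symm }
  rw [← Matrix.det_submatrix_equiv_self e, Matrix.det_fin_one]
  rfl

lemma det_psub_pair (M : Matrix (Fin 5) (Fin 5) ℝ) (i j : Fin 5) (h : i ≠ j) :
    (psub M {i,j}).det = M i i * M j j - M i j * M j i := by
  let e : Fin 2 ≃ ({i,j} : Finset (Fin 5)) :=
    { toFun := ![⟨i, by simp⟩, ⟨j, by simp⟩]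
      invFun := fun x => if x.1 = i then 0 else 1
      left_inv := by
        intro x; fin_cases x <;> simp [h.symm]
      right_inv := by
        rintro ⟨x, hx⟩
        rcases Finset.mem_insert.mp hx with h1 | h1
        · subst h1; simp
        · rw [Finset.mem_singleton] at h1; subst h1; simp [h.symm] }
  rw [← Matrix.det_submatrix_equiv_self e, Matrix.det_fin_two]
  rfl

lemma det_psub_triple (M : Matrix (Fin 5) (Fin 5) ℝ) (i j k : Fin 5)
    (hij : i ≠ j) (hik : i ≠ k) (hjk : j ≠ k) :
    (psub M {i,j,k}).det =
      M i i * M j j * M k k - M i i * M j k * M k j - M i j * M j i * M k k +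
        M i j * M j k * M k i + M i k * M j i * M k j - M i k * M j j * M k i := by
  let e : Fin 3 ≃ ({i,j,k} : Finset (Fin 5)) :=
    { toFun := ![⟨i, by simp⟩, ⟨j, by simp⟩, ⟨k, by simp⟩]
      invFun := fun x => if x.1 = i then 0 else if x.1 = j then 1 else 2
      left_inv := by
        intro x; fin_cases x <;> simp [hij.symm, hik.symm, hjk.symm]
      right_inv := by
        rintro ⟨x, hx⟩
        rcases Finset.mem_insert.mp hx with h1 | h1
        · subst h1; simp
        · rcases Finset.mem_insert.mp h1 with h2 | h2
          · subst h2; simp [hij.symm]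
          · rw [Finset.mem_singleton] at h2; subst h2; simp [hik.symm, hjk.symm] }
  rw [← Matrix.det_submatrix_equiv_self e, Matrix.det_fin_three]
  rfl

lemma q5_mem1 (i : Fin 5) : ({i} : Finset (Fin 5)) ∈ Q5 :=
  Or.inr (Or.inr (Or.inl ⟨i, rfl⟩))
lemma q5_mem2 (i : Fin 5) : ({i, i+2} : Finset (Fin 5)) ∈ Q5 :=
  Or.inr (Or.inr (Or.inr (Or.inl ⟨i, rfl⟩)))
lemma q5_mem3 (i : Fin 5) : ({i, i+1, i+2} : Finset (Fin 5)) ∈ Q5 :=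
  Or.inr (Or.inr (Or.inr (Or.inr (Or.inl ⟨i, rfl⟩))))
lemma q5_nmem1 : ∀ i : Fin 5, ({i, i+1} : Finset (Fin 5)) ∉ Q5 := by
  simp only [Q5, Set.mem_setOf_eq]; decide
lemma q5_nmem2 : ∀ i : Fin 5, ({i, i+1, i+3} : Finset (Fin 5)) ∉ Q5 := by
  simp only [Q5, Set.mem_setOf_eq]; decide
lemma fin5_dist : ∀ i : Fin 5,
    i ≠ i+1 ∧ i ≠ i+2 ∧ i ≠ i+3 ∧ i+1 ≠ i+2 ∧ i+1 ≠ i+3 := by decide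
lemma fin5_add : ∀ i : Fin 5,
    i+1+1 = i+2 ∧ i+1+2 = i+3 ∧ i+3+2 = i ∧ i+4+1 = i ∧ i+4+3 = i+2 ∧ i+2+2 = i+4 := by decide

/-- no 5×5 real matrix detects the quasi-trees of `ℂ₅`. -/
theorem stmt15 :
    ¬ ∃ M : Matrix (Fin 5) (Fin 5) ℝ, ∀ X : Finset (Fin 5),
        (X ∈ Q5 → (psub M X).det = 1) ∧ (X ∉ Q5 → (psub M X).det = 0) := by
  rintro ⟨M, h⟩
  -- diagonal entries are 1
  have hd : ∀ i : Fin 5, M i i = 1 := by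
    intro i
    have := (h {i}).1 (q5_mem1 i)
    rwa [det_psub_singleton] at this
  -- adjacent products are 1
  have hadj : ∀ i : Fin 5, M i (i+1) * M (i+1) i = 1 := by
    intro i
    have := (h {i, i+1}).2 (q5_nmem1 i)
    rw [det_psub_pair M i (i+1) (fin5_dist i).1, hd, hd] at this
    linarith
  -- skip products are 0
  have hskip : ∀ i : Fin 5, M i (i+2) * M (i+2) i = 0 := by
    intro i
    have := (h {i, i+2}).1 (q5_mem2 i)
    rw [det_psub_pair M i (i+2) (fin5_dist i).2.1, hd, hd] at this
    linarith
  -- consecutive triples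
  have htri : ∀ i : Fin 5,
      M i (i+1) * M (i+1) (i+2) * M (i+2) i +
        M i (i+2) * M (i+1) i * M (i+2) (i+1) = 2 := by
    intro i
    have H := (h {i, i+1, i+2}).1 (q5_mem3 i)
    rw [det_psub_triple M i (i+1) (i+2) (fin5_dist i).1 (fin5_dist i).2.1
      (fin5_dist i).2.2.2.1, hd, hd, hd] at H
    have h1 := hadj i
    have h2 := hadj (i+1)
    rw [(fin5_add i).1] at h2
    have h3 := hskip i
    nlinarith [H, h1, h2, h3]
  -- nonconsecutive triples
  have hntri : ∀ i : Fin 5,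
      M i (i+1) * M (i+1) (i+3) * M (i+3) i +
        M i (i+3) * M (i+1) i * M (i+3) (i+1) = 0 := by
    intro i
    have H := (h {i, i+1, i+3}).2 (q5_nmem2 i)
    rw [det_psub_triple M i (i+1) (i+3) (fin5_dist i).1 (fin5_dist i).2.2.1
      (fin5_dist i).2.2.2.2, hd, hd, hd] at H
    have h1 := hadj i
    have h2 := hskip (i+1)
    rw [(fin5_add i).2.1] at h2
    have h3 := hskip (i+3)
    rw [(fin5_add i).2.2.1] at h3
    nlinarith [H, h1, h2, h3]
  -- dichotomy: for each i, exactly one of M i (i+2), M (i+2) i is nonzero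
  have key1 : ∀ i : Fin 5,
      (M i (i+2) ≠ 0 ∧ M (i+2) i = 0) ∨ (M i (i+2) = 0 ∧ M (i+2) i ≠ 0) := by
    intro i
    have hs := hskip i
    have ht := htri i
    rcases mul_eq_zero.mp hs with hc | hdz
    · right
      refine ⟨hc, fun hd0 => ?_⟩
      rw [hc, hd0] at ht
      norm_num at ht
    · by_cases hc : M i (i+2) = 0
      · right
        refine ⟨hc, fun hd0 => ?_⟩
        rw [hc, hd0] at ht
        norm_num at ht
      · left; exact ⟨hc, hdz⟩
  -- the 2-coloring constraint
  set P : Fin 5 → Prop := fun j => M j (j+2) ≠ 0 with hP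
  have key2 : ∀ j : Fin 5, P j ↔ ¬ P (j+2) := by
    intro j
    have hn := hntri (j+4)
    rw [(fin5_add j).2.2.2.1, (fin5_add j).2.2.2.2.1] at hn
    have ha := hadj (j+4)
    rw [(fin5_add j).2.2.2.1] at ha
    have ha1 : M (j+4) j ≠ 0 := left_ne_zero_of_mul_eq_one ha
    have ha2 : M j (j+4) ≠ 0 := right_ne_zero_of_mul_eq_one ha
    have k1 := key1 j
    have k2 := key1 (j+2)
    rw [(fin5_add j).2.2.2.2.2] at k2
    simp only [hP]
    rw [(fin5_add j).2.2.2.2.2]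
    constructor
    · intro hcj
      intro hcj2
      have hdj2 : M (j+4) (j+2) = 0 := by
        rcases k2 with ⟨_, h2⟩ | ⟨h1, _⟩
        · exact h2
        · exact absurd h1 hcj2
      rw [hdj2] at hn
      have : M (j+4) j * M j (j+2) * M (j+2) (j+4) = 0 := by linarith
      rcases mul_eq_zero.mp this with h' | h'
      · rcases mul_eq_zero.mp h' with h'' | h''
        · exact ha1 h''
        · exact hcj h''
      · exact hcj2 h'
    · intro hcj2 hcj
      have hcj2' : M (j+2) (j+4) = 0 := not_not.mp hcj2
      have hdj2 : M (j+4) (j+2) ≠ 0 := by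
        rcases k2 with ⟨h1, _⟩ | ⟨_, h2⟩
        · exact absurd hcj2' h1
        · exact h2
      have hdj : M (j+2) j ≠ 0 := by
        rcases k1 with ⟨h1, _⟩ | ⟨_, h2⟩
        · exact absurd hcj h1
        · exact h2
      rw [hcj, hcj2'] at hn
      have : M (j+4) (j+2) * M j (j+4) * M (j+2) j = 0 := by linarith
      rcases mul_eq_zero.mp this with h' | h'
      · rcases mul_eq_zero.mp h' with h'' | h''
        · exact hdj2 h''
        · exact ha2 h''
      · exact hdj h'
  -- parity contradiction on the odd cycle 0 → 2 → 4 → 1 → 3 → 0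
  have h0 := key2 0
  have h2 := key2 2
  have h4 := key2 4
  have h1 := key2 1
  have h3 := key2 3
  have e0 : (0:Fin 5)+2 = 2 := by decide
  have e2 : (2:Fin 5)+2 = 4 := by decide
  have e4 : (4:Fin 5)+2 = 1 := by decide
  have e1 : (1:Fin 5)+2 = 3 := by decide
  have e3 : (3:Fin 5)+2 = 0 := by decide
  rw [e0] at h0; rw [e2] at h2; rw [e4] at h4; rw [e1] at h1; rw [e3] at h3
  tauto
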